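/- arXiv:1912.00788 — 2 statements merged into one kernel-verified Lean document; each statement's English description precedes it below -/
import Mathlib

section
/- Let X = [I_{k+1} | (x_{l,m})] be the (k+1)×(n+1) matrix with identity block in columns 0,...,k and variable entries x_{l,m} (0 ≤ l ≤ k, k+1 ≤ m ≤ n). Fix a (k+1)-subset J of {0,...,n} and sets K ⊂ {0,...,k}, K' ⊂ {k+1,...,n} with |K| = |K'| = m'. Then the iterated partial derivative of det(M_J) with respect to the variables {x_{k_i, k'_i}} pairing K with K' (one derivative per pair) is, up to sign, det(M_{J,K,K'}) if K' ⊂ J and m' ≤ d(I,J), and is 0 if K' ⊄ J, where M_{J,K,K'} is obtained from M_J by deleting the columns indexed by K' and the rows indexed by K, and I = {0,...,k}. -/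
/-!
Each variable `x_{l,m}` of `X = [I | (x_{l,m})]` occurs in exactly one entry, `(l, m)`, and there
with derivative `1`. Since a derivation applied to a determinant is the sum over the columns of
the determinants with that column differentiated, `∂ det M_J / ∂ x_{l,m}` vanishes when `m ∉ J`
and otherwise equals the determinant of `M_J` with column `m` replaced by the unit vector `e_l`.
The new column is constant, and the `k'_i` are distinct, so the derivatives can be iterated: the
result is `0` if some `k'_i ∉ J`, and otherwise the determinant of `M_J` with the columns `K'`
replaced by the unit vectors `e_K`. Listing rows as `(I \ K, K)` and columns as `(J \ K', K')`
makes that matrix block lower triangular with diagonal blocks `M_{J,K,K'}` and `1`, so up to the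
sign of these reorderings its determinant is `det M_{J,K,K'}`.
-/

open MvPolynomial Matrix Function

namespace Derivation

variable {R A : Type*} [CommSemiring R] [CommRing A] [Algebra R A] (D : Derivation R A A)

theorem leibniz_finsetProd {ι : Type*} [DecidableEq ι] (s : Finset ι) (f : ι → A) :
    D (∏ i ∈ s, f i) = ∑ i ∈ s, (∏ j ∈ s.erase i, f j) * D (f i) := by
  induction s using Finset.induction with
  | empty => simp
  | insert x s hx ih =>
    rw [Finset.prod_insert hx, leibniz, ih, Finset.sum_insert hx, Finset.erase_insert hx,
      smul_eq_mul, smul_eq_mul, Finset.mul_sum, add_comm]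
    congr 1
    refine Finset.sum_congr rfl fun i hi => ?_
    rw [Finset.erase_insert_of_ne (ne_of_mem_of_not_mem hi hx).symm, Finset.prod_insert
      (fun h => hx (Finset.mem_of_mem_erase h)), mul_assoc]

variable {n : Type*} [Fintype n] [DecidableEq n]

theorem map_det (M : Matrix n n A) :
    D M.det = ∑ q, (M.updateCol q fun p => D (M p q)).det := by
  simp only [det_apply, map_sum, Units.smul_def, map_zsmul, leibniz_finsetProd, Finset.smul_sum]
  rw [Finset.sum_comm]
  refine Finset.sum_congr rfl fun q _ => Finset.sum_congr rfl fun σ _ => ?_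
  rw [← Finset.prod_erase_mul _ _ (Finset.mem_univ q), updateCol_self]
  congr 2
  exact Finset.prod_congr rfl fun j hj => (updateCol_ne (Finset.ne_of_mem_erase hj)).symm

theorem map_det_of_map_eq_zero_of_ne (M : Matrix n n A) (q₀ : n)
    (hM : ∀ p q, q ≠ q₀ → D (M p q) = 0) :
    D M.det = (M.updateCol q₀ fun p => D (M p q₀)).det := by
  rw [map_det, Finset.sum_eq_single q₀ (fun q _ hq => ?_) (by simp)]
  exact det_eq_zero_of_column_eq_zero q fun p => by rw [updateCol_self, hM p q hq]

theorem map_det_eq_zero (M : Matrix n n A) (hM : ∀ p q, D (M p q) = 0) : D M.det = 0 :=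
  (map_det D M).trans <| Finset.sum_eq_zero fun q _ =>
    det_eq_zero_of_column_eq_zero q fun p => by rw [updateCol_self, hM]

end Derivation

theorem LinearMap.foldr_comp_ofFn_apply {R M ι : Type*} [Semiring R] [AddCommMonoid M]
    [Module R M] {n : ℕ} (φ : ι → M →ₗ[R] M) (v : Fin n → ι) (x : M) :
    (List.ofFn fun i => φ (v i)).foldr (fun f g => f ∘ₗ g) LinearMap.id x =
      (List.ofFn v).foldr (fun w y => φ w y) x := by
  induction n with
  | zero => rfl
  | succ n ih => simp [List.ofFn_succ, ih]

theorem Set.range_sumElim_eq {α β γ : Type*} {f : α → γ} {g : β → γ} {S : Set γ}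
    (hg : ∀ i, g i ∈ S) (hf : ∀ x, (∃ j, f j = x) ↔ x ∈ S ∧ ∀ i, g i ≠ x) :
    Set.range (Sum.elim f g) = S := by
  ext x
  rw [Set.Sum.elim_range, Set.mem_union, Set.mem_range, hf]
  by_cases hx : ∃ i, g i = x
  · obtain ⟨i, rfl⟩ := hx
    simpa using hg i
  · simp only [Set.mem_range, hx, or_false, and_iff_left_iff_imp]
    exact fun _ i hi => hx ⟨i, hi⟩

theorem Function.Injective.exists_equiv_apply_eq {α β γ : Type*} {f : α → γ} {g : β → γ}
    (hf : Injective f) (hg : Injective g) (h : Set.range f = Set.range g) :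
    ∃ e : α ≃ β, ∀ x, g (e x) = f x :=
  ⟨(Equiv.ofInjective f hf).trans ((Equiv.setCongr h).trans (Equiv.ofInjective g hg).symm),
    fun x => by simp [Equiv.apply_ofInjective_symm]⟩

namespace Matrix

theorem det_submatrix_equiv_eq_or_eq_neg {R ι κ : Type*} [CommRing R] [Fintype ι] [DecidableEq ι]
    [Fintype κ] [DecidableEq κ] (e f : κ ≃ ι) (M : Matrix ι ι R) :
    (M.submatrix e f).det = M.det ∨ (M.submatrix e f).det = -M.det := by
  have h := det_reindex e.symm f.symm M
  rw [reindex_apply, Equiv.symm_symm, Equiv.symm_symm] at h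
  rcases Int.units_eq_one_or (Equiv.Perm.sign (f.symm.trans e)) with hs | hs <;> simp [h, hs]

variable {R ι ι₁ ι₂ : Type*} [CommRing R] [Fintype ι] [DecidableEq ι] [Fintype ι₁]
  [DecidableEq ι₁] [Fintype ι₂] [DecidableEq ι₂]

/-- After ordering rows and columns along `er` and `ec`, `N` is block lower triangular with an
identity block in the lower right corner. -/
theorem det_eq_or_eq_neg_det_submatrix_of_col_eq_single (N : Matrix ι ι R)
    (er ec : ι₁ ⊕ ι₂ ≃ ι) (hN : ∀ j p, N p (ec (.inr j)) = (Pi.single (er (.inr j)) 1 : ι → R) p) :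
    N.det = (N.submatrix (er ∘ .inl) (ec ∘ .inl)).det ∨
      N.det = -(N.submatrix (er ∘ .inl) (ec ∘ .inl)).det := by
  have hblock : N.submatrix er ec = fromBlocks (N.submatrix (er ∘ .inl) (ec ∘ .inl)) 0
      (N.submatrix (er ∘ .inr) (ec ∘ .inl)) 1 := by
    ext (p | p) (q | q) <;> simp [hN, Pi.single_apply, one_apply, er.injective.eq_iff]
  have hdet : (N.submatrix er ec).det = (N.submatrix (er ∘ .inl) (ec ∘ .inl)).det := by
    rw [hblock, det_fromBlocks_zero₁₂, det_one, mul_one]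
  rcases det_submatrix_equiv_eq_or_eq_neg er ec N with h | h
  · exact .inl (h.symm.trans hdet)
  · exact .inr (by rw [← hdet, h, neg_neg])

theorem det_submatrix_eq_or_eq_neg_of_col_eq_single {κ : Type*} (G : Matrix ι κ R)
    {col : ι → κ} (hcol : Injective col) {ρ : ι₁ → ι} {a : ι₂ → ι}
    (hρa : Bijective (Sum.elim ρ a)) {c : ι₁ → κ} {b : ι₂ → κ} (hcb : Injective (Sum.elim c b))
    (hrange : Set.range (Sum.elim c b) = Set.range col)
    (hG : ∀ j p, G p (b j) = (Pi.single (a j) 1 : ι → R) p) :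
    (G.submatrix id col).det = (G.submatrix ρ c).det ∨
      (G.submatrix id col).det = -(G.submatrix ρ c).det := by
  obtain ⟨ec, hec⟩ := hcb.exists_equiv_apply_eq hcol hrange
  let er := Equiv.ofBijective _ hρa
  have hsub : G.submatrix ρ c = (G.submatrix id col).submatrix (er ∘ .inl) (ec ∘ .inl) := by
    ext p q : 1
    simp [hec, er]
  rw [hsub]
  exact det_eq_or_eq_neg_det_submatrix_of_col_eq_single _ er ec fun j p => by
    simpa [hec, er] using hG j p

end Matrix

section UnitColumns

variable {ι κ : Type*} [DecidableEq ι] [DecidableEq κ]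

def setUnitCols {α : Type*} [Zero α] [One α] (F : Matrix ι κ α) (L : List (ι × κ)) :
    Matrix ι κ α :=
  L.foldr (fun v G => G.updateCol v.2 (Pi.single v.1 1)) F

variable {α : Type*} [Zero α] [One α] (F : Matrix ι κ α)

theorem setUnitCols_apply_of_notMem {L : List (ι × κ)} {m : κ} (hm : m ∉ L.map Prod.snd)
    (l : ι) : setUnitCols F L l m = F l m := by
  induction L with
  | nil => rfl
  | cons v L ih =>
    simp only [List.map_cons, List.mem_cons, not_or] at hm
    rw [setUnitCols, List.foldr_cons, updateCol_ne hm.1, ← ih hm.2, setUnitCols]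

theorem setUnitCols_apply_of_mem {L : List (ι × κ)} (hL : (L.map Prod.snd).Nodup) {v : ι × κ}
    (hv : v ∈ L) (l : ι) : setUnitCols F L l v.2 = (Pi.single v.1 1 : ι → α) l := by
  induction L with
  | nil => cases hv
  | cons w L ih =>
    rw [List.map_cons, List.nodup_cons] at hL
    rw [setUnitCols, List.foldr_cons]
    rcases List.mem_cons.mp hv with rfl | hv
    · rw [updateCol_self]
    · have hvw : v.2 ≠ w.2 := fun h => hL.1 (h ▸ List.mem_map_of_mem hv)
      rw [updateCol_ne hvw, ← setUnitCols, ih hL.2 hv]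

end UnitColumns

section PderivDet

-- The hypothesis `F.map (pderiv v) = Matrix.single v.1 v.2 1` says that the variable `x_v`
-- enters `F` only through the entry `v`, with derivative `1` there, as in `[I | X]`.
variable {R ι κ : Type*} [CommRing R] [DecidableEq ι] [DecidableEq κ]
  {F : Matrix ι κ (MvPolynomial (ι × κ) R)} {v : ι × κ}

theorem map_pderiv_setUnitCols (hF : F.map (pderiv v) = Matrix.single v.1 v.2 1)
    {L : List (ι × κ)} (hv : v.2 ∉ L.map Prod.snd) :
    (setUnitCols F L).map (pderiv v) = Matrix.single v.1 v.2 1 := by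
  induction L with
  | nil => exact hF
  | cons w L ih =>
    simp only [List.map_cons, List.mem_cons, not_or] at hv
    rw [setUnitCols, List.foldr_cons, map_updateCol, ← setUnitCols, ih hv.2]
    ext l m : 1
    by_cases hm : m = w.2
    · subst hm
      rw [updateCol_self, single_apply_of_col_ne _ _ hv.1]
      rcases eq_or_ne l w.1 with rfl | hl <;> simp [*]
    · rw [updateCol_ne hm]

variable [Fintype ι] {col : ι → κ}

theorem pderiv_det_submatrix_of_eq (hF : F.map (pderiv v) = Matrix.single v.1 v.2 1)
    (hcol : Injective col) {q₀ : ι} (hq₀ : col q₀ = v.2) :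
    pderiv v (F.submatrix id col).det =
      ((F.updateCol v.2 (Pi.single v.1 1)).submatrix id col).det := by
  have hder : ∀ p q, pderiv v (F p q) = Matrix.single v.1 v.2 1 p q := fun p q => by
    rw [← hF, map_apply]
  rw [Derivation.map_det_of_map_eq_zero_of_ne _ _ q₀ fun p q hq => ?_]
  · congr 1
    ext p q : 1
    by_cases hq : q = q₀
    · subst hq
      simp [hder, hq₀, Matrix.single_apply, Pi.single_apply, eq_comm]
    · rw [submatrix_apply, updateCol_ne hq, submatrix_apply, updateCol_ne]
      rwa [← hq₀, hcol.ne_iff]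
  · rw [submatrix_apply, hder, single_apply_of_col_ne]
    rwa [← hq₀, hcol.ne_iff, ne_comm]

theorem pderiv_det_submatrix_of_notMem_range (hF : F.map (pderiv v) = Matrix.single v.1 v.2 1)
    (hv : v.2 ∉ Set.range col) : pderiv v (F.submatrix id col).det = 0 :=
  Derivation.map_det_eq_zero _ _ fun p q => by
    rw [submatrix_apply, ← map_apply (f := pderiv v), hF,
      single_apply_of_col_ne _ _ fun h => hv ⟨q, h.symm⟩]

variable {L : List (ι × κ)}

theorem foldr_pderiv_det_submatrix (hcol : Injective col) (hL : (L.map Prod.snd).Nodup)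
    (hF : ∀ v ∈ L, F.map (pderiv v) = Matrix.single v.1 v.2 1)
    (hLcol : ∀ v ∈ L, v.2 ∈ Set.range col) :
    L.foldr (fun v p => pderiv v p) (F.submatrix id col).det =
      ((setUnitCols F L).submatrix id col).det := by
  induction L with
  | nil => rfl
  | cons w L ih =>
    rw [List.map_cons, List.nodup_cons] at hL
    obtain ⟨q₀, hq₀⟩ := hLcol w List.mem_cons_self
    rw [List.foldr_cons, ih hL.2 (fun v hv => hF v (List.mem_cons_of_mem w hv))
      (fun v hv => hLcol v (List.mem_cons_of_mem w hv)),
      pderiv_det_submatrix_of_eq (map_pderiv_setUnitCols (hF w List.mem_cons_self) hL.1) hcol hq₀]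
    rfl

theorem foldr_pderiv_det_submatrix_eq_zero (hcol : Injective col) (hL : (L.map Prod.snd).Nodup)
    (hF : ∀ v ∈ L, F.map (pderiv v) = Matrix.single v.1 v.2 1)
    (hLcol : ∃ v ∈ L, v.2 ∉ Set.range col) :
    L.foldr (fun v p => pderiv v p) (F.submatrix id col).det = 0 := by
  induction L with
  | nil => simp at hLcol
  | cons w L ih =>
    rw [List.map_cons, List.nodup_cons] at hL
    have hF' : ∀ v ∈ L, F.map (pderiv v) = Matrix.single v.1 v.2 1 :=
      fun v hv => hF v (List.mem_cons_of_mem w hv)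
    rw [List.foldr_cons]
    by_cases hLcol' : ∃ v ∈ L, v.2 ∉ Set.range col
    · rw [ih hL.2 hF' hLcol', map_zero]
    · push Not at hLcol'
      have hw : w.2 ∉ Set.range col := by
        obtain ⟨v, hv, hvcol⟩ := hLcol
        rcases List.mem_cons.mp hv with rfl | hv
        · exact hvcol
        · exact absurd (hLcol' v hv) hvcol
      rw [foldr_pderiv_det_submatrix hcol hL.2 hF' hLcol']
      exact pderiv_det_submatrix_of_notMem_range
        (map_pderiv_setUnitCols (hF w List.mem_cons_self) hL.1) hw

end PderivDet

theorem of_map_pderiv_eq_single {R : Type*} [CommRing R] {k : ℕ}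
    {A : Fin (k + 1) → ℕ → MvPolynomial (Fin (k + 1) × ℕ) R}
    (hA : ∀ l m, A l m = if m = (l : ℕ) then 1 else if m ≤ k then 0 else X (l, m))
    {v : Fin (k + 1) × ℕ} (hv : k < v.2) :
    (Matrix.of A).map (pderiv v) = Matrix.single v.1 v.2 1 := by
  ext l m : 1
  rw [map_apply, of_apply, hA]
  split_ifs with h₁ h₂ <;>
    simp [pderiv_X, Pi.single_apply, Matrix.single_apply, eq_comm, Prod.ext_iff]
  all_goals rintro rfl rfl; have := v.1.isLt; omega

open MvPolynomial in
theorem stmt_15_general (n k m' : ℕ) (J : Finset ℕ)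
    (hJc : J.card = k + 1)
    (A : Fin (k + 1) → ℕ → MvPolynomial (Fin (k + 1) × ℕ) ℚ)
    (hA : ∀ l m, A l m =
      if m = (l : ℕ) then 1 else if m ≤ k then 0 else MvPolynomial.X (l, m))
    (MJ : Matrix (Fin (k + 1)) (Fin (k + 1)) (MvPolynomial (Fin (k + 1) × ℕ) ℚ))
    (hMJ : ∀ p q, MJ p q = A p ((J.orderIsoOfFin hJc q : {x // x ∈ J}) : ℕ))
    -- the rows K ⊆ I = {0,...,k} and columns K' ⊆ {k+1,...,n}, paired by index
    (a : Fin m' → Fin (k + 1)) (ha : Function.Injective a)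
    (b : Fin m' → ℕ) (hb : Function.Injective b)
    (hbr : ∀ i, b i ∈ Finset.Icc (k + 1) n)
    -- the iterated partial derivative with respect to the x_{a i, b i}
    (D : MvPolynomial (Fin (k + 1) × ℕ) ℚ →ₗ[ℚ] MvPolynomial (Fin (k + 1) × ℕ) ℚ)
    (hD : D = (List.ofFn fun i : Fin m' =>
      (MvPolynomial.pderiv (R := ℚ) ((a i, b i) : Fin (k + 1) × ℕ)).toLinearMap).foldr
        (fun f g => f ∘ₗ g) LinearMap.id)
    -- enumerations of the remaining rows {0,...,k} \ K and columns J \ K'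
    (ρ : Fin (k + 1 - m') → Fin (k + 1)) (hρ : Function.Injective ρ)
    (hρr : ∀ x, (∃ j, ρ j = x) ↔ ∀ i, a i ≠ x)
    (c : Fin (k + 1 - m') → ℕ) (hc : Function.Injective c)
    (hcr : ∀ x, (∃ j, c j = x) ↔ x ∈ J ∧ ∀ i, b i ≠ x)
    (M' : Matrix (Fin (k + 1 - m')) (Fin (k + 1 - m'))
      (MvPolynomial (Fin (k + 1) × ℕ) ℚ))
    (hM' : ∀ p q, M' p q = A (ρ p) (c q)) :
    ((∀ i, b i ∈ J) → m' ≤ (k + 1) - ((Finset.range (k + 1)) ∩ J).card →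
      D MJ.det = M'.det ∨ D MJ.det = - M'.det) ∧
    ((∃ i, b i ∉ J) → D MJ.det = 0) := by
  classical
  set col := J.orderEmbOfFin hJc
  set L := List.ofFn fun i => (a i, b i)
  have hL : (L.map Prod.snd).Nodup := by
    simpa [L, List.map_ofFn, Function.comp_def] using List.nodup_ofFn.mpr hb
  have hF : ∀ v ∈ L, (Matrix.of A).map (pderiv v) = Matrix.single v.1 v.2 1 := by
    simp only [L, List.mem_ofFn, forall_exists_index]
    rintro _ i rfl
    exact of_map_pderiv_eq_single hA (Finset.mem_Icc.mp (hbr i)).1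
  have hDL : D MJ.det = L.foldr (fun v p => pderiv v p) ((Matrix.of A).submatrix id col).det := by
    rw [hD, LinearMap.foldr_comp_ofFn_apply (fun v => (pderiv v).toLinearMap)]
    congr 2
    ext p q : 1
    exact hMJ p q
  refine ⟨fun hbJ _ => ?_, fun ⟨i, hi⟩ => ?_⟩
  · have hLcol : ∀ v ∈ L, v.2 ∈ Set.range col := by
      simp only [L, List.mem_ofFn, forall_exists_index]
      rintro _ i rfl
      simpa [col] using hbJ i
    have hM' : M' = (setUnitCols (Matrix.of A) L).submatrix ρ c := by
      ext p q : 1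
      have hcL : c q ∉ L.map Prod.snd := by
        simpa [L, Function.comp_def] using ((hcr (c q)).mp ⟨q, rfl⟩).2
      simp [hM', setUnitCols_apply_of_notMem _ hcL]
    have hrows : Set.range (Sum.elim ρ a) = Set.univ :=
      Set.range_sumElim_eq (fun _ => trivial) fun x => by simpa using hρr x
    have hcols : Set.range (Sum.elim c b) = Set.range col := by
      rw [Finset.range_orderEmbOfFin]
      exact Set.range_sumElim_eq hbJ hcr
    rw [hDL, foldr_pderiv_det_submatrix col.injective hL hF hLcol, hM']
    exact det_submatrix_eq_or_eq_neg_of_col_eq_single _ col.injective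
      ⟨hρ.sumElim ha fun j i => ((hρr (ρ j)).mp ⟨j, rfl⟩ i).symm, Set.range_eq_univ.mp hrows⟩
      (hc.sumElim hb fun j i => (((hcr (c j)).mp ⟨j, rfl⟩).2 i).symm) hcols
      fun j => setUnitCols_apply_of_mem _ hL (List.mem_ofFn.mpr ⟨j, rfl⟩)
  · rw [hDL]
    exact foldr_pderiv_det_submatrix_eq_zero col.injective hL hF
      ⟨(a i, b i), List.mem_ofFn.mpr ⟨i, rfl⟩, by simpa [col] using hi⟩

open MvPolynomial in
/-- Iterated partial derivatives of the Plücker coordinates of the standard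
parametrization of G(k,n): differentiating det(M_J) once with respect to each
variable x_{k_i,k'_i} (pairing K = {k_1,...,k_{m'}} ⊆ {0,...,k} with
K' = {k'_1,...,k'_{m'}} ⊆ {k+1,...,n}) yields ± det(M_{J,K,K'}) if K' ⊆ J
(and m' ≤ d(I,J)), and 0 if K' ⊄ J.  Here M_{J,K,K'} is obtained from M_J by
deleting the rows indexed by K and the columns indexed by K'. -/
theorem stmt_15 (n k m' : ℕ) (hkn : k ≤ n) (J : Finset ℕ)
    (hJ : J ⊆ Finset.range (n + 1)) (hJc : J.card = k + 1)
    (A : Fin (k + 1) → ℕ → MvPolynomial (Fin (k + 1) × ℕ) ℚ)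
    (hA : ∀ l m, A l m =
      if m = (l : ℕ) then 1 else if m ≤ k then 0 else MvPolynomial.X (l, m))
    (MJ : Matrix (Fin (k + 1)) (Fin (k + 1)) (MvPolynomial (Fin (k + 1) × ℕ) ℚ))
    (hMJ : ∀ p q, MJ p q = A p ((J.orderIsoOfFin hJc q : {x // x ∈ J}) : ℕ))
    -- the rows K ⊆ I = {0,...,k} and columns K' ⊆ {k+1,...,n}, paired by index
    (a : Fin m' → Fin (k + 1)) (ha : Function.Injective a)
    (b : Fin m' → ℕ) (hb : Function.Injective b)
    (hbr : ∀ i, b i ∈ Finset.Icc (k + 1) n)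
    -- the iterated partial derivative with respect to the x_{a i, b i}
    (D : MvPolynomial (Fin (k + 1) × ℕ) ℚ →ₗ[ℚ] MvPolynomial (Fin (k + 1) × ℕ) ℚ)
    (hD : D = (List.ofFn fun i : Fin m' =>
      (MvPolynomial.pderiv (R := ℚ) ((a i, b i) : Fin (k + 1) × ℕ)).toLinearMap).foldr
        (fun f g => f ∘ₗ g) LinearMap.id)
    -- enumerations of the remaining rows {0,...,k} \ K and columns J \ K'
    (ρ : Fin (k + 1 - m') → Fin (k + 1)) (hρ : Function.Injective ρ)
    (hρr : ∀ x, (∃ j, ρ j = x) ↔ ∀ i, a i ≠ x)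
    (c : Fin (k + 1 - m') → ℕ) (hc : Function.Injective c)
    (hcr : ∀ x, (∃ j, c j = x) ↔ x ∈ J ∧ ∀ i, b i ≠ x)
    (M' : Matrix (Fin (k + 1 - m')) (Fin (k + 1 - m'))
      (MvPolynomial (Fin (k + 1) × ℕ) ℚ))
    (hM' : ∀ p q, M' p q = A (ρ p) (c q)) :
    ((∀ i, b i ∈ J) → m' ≤ (k + 1) - ((Finset.range (k + 1)) ∩ J).card →
      D MJ.det = M'.det ∨ D MJ.det = - M'.det) ∧
    ((∃ i, b i ∉ J) → D MJ.det = 0) :=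
  stmt_15_general n k m' J hJc A hA MJ hMJ a ha b hb hbr D hD ρ hρ hρr c hc hcr M' hM'
end

section
/- Evaluating at x = 0 (all variable entries zero): with notation as above, the iterated partial derivative ∂^{m'} det(M_J) / ∂x_{k_1,k'_1}...∂x_{k_{m'},k'_{m'}} at 0 equals ±1 if J = K' ∪ (I \ K), and equals 0 otherwise, where I = {0,...,k}, K = {k_1,...,k_{m'}} ⊂ I, K' = {k'_1,...,k'_{m'}} ⊂ {k+1,...,n}. -/
/-!
Each column of `M_J` is either a standard basis vector `e_j` (for `j ≤ k`) or the column of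
variables `(x_{l,j})_l`, so every Leibniz term of `det M_J` is `±` a squarefree monomial. Since the
variables `x_{k_i,k'_i}` are distinct, differentiating and evaluating at `0` extracts the
coefficient of `∏ x_{k_i,k'_i}`. A permutation produces this monomial exactly when it sends the
column `k'_i` to the row `k_i` and every other column `j ≤ k` to the row `j`; such a permutation
forces `J = K' ∪ (I \ K)`, and in that case there is exactly one, so the coefficient is its sign.
-/

open MvPolynomial Finset Equiv

theorem Finsupp.sum_single_one_inj {σ : Type*} {s t : Finset σ} :
    ∑ x ∈ s, Finsupp.single x 1 = ∑ x ∈ t, Finsupp.single x 1 ↔ s = t := by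
  refine ⟨fun h => ?_, fun h => h ▸ rfl⟩
  have h' := congrArg Finsupp.toMultiset h
  rw [Finsupp.toMultiset_sum_single, Finsupp.toMultiset_sum_single, one_nsmul, one_nsmul] at h'
  exact Finset.val_inj.mp h'

namespace MvPolynomial

variable {σ R : Type*} [CommSemiring R]

theorem coeff_foldr_ofFn_pderiv {m : ℕ} (v : Fin m → σ) (hv : Function.Injective v) (t : σ →₀ ℕ)
    (ht : ∀ i, t (v i) = 0) (P : MvPolynomial σ R) :
    coeff t ((List.ofFn fun i => (pderiv (v i)).toLinearMap).foldr (fun f g => f ∘ₗ g)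
      LinearMap.id P) = coeff (t + ∑ i, Finsupp.single (v i) 1) P := by
  induction m generalizing t with
  | zero => simp
  | succ m ih =>
    have ht' : ∀ i : Fin m, (t + Finsupp.single (v 0) 1 : σ →₀ ℕ) (v i.succ) = 0 := fun i => by
      simp [ht, hv.ne (Fin.succ_ne_zero i).symm]
    rw [List.ofFn_succ, List.foldr_cons, LinearMap.comp_apply, Derivation.coeFn_coe,
      coeff_pderiv, ih (fun i => v i.succ) (hv.comp (Fin.succ_injective m)) _ ht', ht 0,
      Fin.sum_univ_succ, add_assoc]
    simp

end MvPolynomial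

namespace Matrix

variable {n σ R : Type*} [Fintype n] [DecidableEq n] [DecidableEq σ] [CommRing R]

theorem coeff_det_of_monomial (e : n → n → σ →₀ ℕ) (r : n → n → R) (s : σ →₀ ℕ) :
    coeff s (of fun p q => monomial (e p q) (r p q)).det =
      ∑ π : Perm n, Perm.sign π • if ∑ q, e (π q) q = s then ∏ q, r (π q) q else 0 := by
  simp only [det_apply, coeff_sum, coeff_smul, of_apply, ← monomial_sum_prod, coeff_monomial]

end Matrix

section MaximalMinor

variable {k m : ℕ}

/-- The columns `g 0, …, g k` of `[I_{k+1} | (x_{l,m})]`. -/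
noncomputable def columnSubmatrix (R : Type*) [CommRing R] (g : Fin (k + 1) → ℕ) :
    Matrix (Fin (k + 1)) (Fin (k + 1)) (MvPolynomial (Fin (k + 1) × ℕ) R) :=
  Matrix.of fun p q => if k < g q then X (p, g q) else if g q = (p : ℕ) then 1 else 0

/-- `π` is a permutation whose Leibniz term in the determinant of `columnSubmatrix R g` is
`± ∏ i, x_{a i, b i}`. -/
def Contributes (g : Fin (k + 1) → ℕ) (a : Fin m → Fin (k + 1)) (b : Fin m → ℕ)
    (π : Perm (Fin (k + 1))) : Prop :=
  (∀ q, k < g q ∨ g q = (π q : ℕ)) ∧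
    (univ.filter fun q => k < g q).image (fun q => (π q, g q)) = univ.image fun i => (a i, b i)

open scoped Classical in
theorem coeff_det_columnSubmatrix {R : Type*} [CommRing R] (g : Fin (k + 1) → ℕ)
    (a : Fin m → Fin (k + 1)) (b : Fin m → ℕ) (hab : Function.Injective fun i => (a i, b i)) :
    coeff (∑ i, Finsupp.single (a i, b i) 1) (columnSubmatrix R g).det =
      ∑ π : Perm (Fin (k + 1)), if Contributes g a b π then (Perm.sign π : R) else 0 := by
  have hM : columnSubmatrix R g = Matrix.of fun (p q : Fin (k + 1)) =>
      monomial (if k < g q then Finsupp.single (p, g q) 1 else 0)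
        (if k < g q ∨ g q = (p : ℕ) then 1 else 0) := by
    refine Matrix.ext fun p q => ?_
    by_cases hq : k < g q
    · simp [columnSubmatrix, hq, X]
    · simp only [columnSubmatrix, Matrix.of_apply, hq, if_false, false_or]
      split_ifs <;> simp
  rw [hM, Matrix.coeff_det_of_monomial]
  refine sum_congr rfl fun π _ => ?_
  have hsum : ∑ q, (if k < g q then Finsupp.single (π q, g q) 1 else 0) =
      ∑ x ∈ (univ.filter fun q => k < g q).image (fun q => (π q, g q)), Finsupp.single x 1 := by
    rw [sum_image fun q _ q' _ h => π.injective (congrArg Prod.fst h), sum_filter]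
  rw [hsum, ← sum_image (f := fun x => Finsupp.single x 1) fun i _ j _ h => hab h]
  simp only [Finsupp.sum_single_one_inj, Fintype.prod_boole, Contributes]
  split_ifs <;> simp_all [Units.smul_def]

end MaximalMinor

section Contributes

variable {k m : ℕ} {g : Fin (k + 1) → ℕ} {a : Fin m → Fin (k + 1)} {b : Fin m → ℕ}
  {π τ : Perm (Fin (k + 1))}

theorem Contributes.exists_index (hπ : Contributes g a b π) {q : Fin (k + 1)} (hq : k < g q) :
    ∃ i, a i = π q ∧ b i = g q := by
  obtain ⟨i, -, hi⟩ := mem_image.mp (hπ.2 ▸ mem_image_of_mem (fun q => (π q, g q))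
    (mem_filter.mpr ⟨mem_univ q, hq⟩))
  exact ⟨i, congrArg Prod.fst hi, congrArg Prod.snd hi⟩

theorem Contributes.exists_column (hπ : Contributes g a b π) (i : Fin m) :
    ∃ q, k < g q ∧ π q = a i ∧ g q = b i := by
  obtain ⟨q, hq, hi⟩ := mem_image.mp (hπ.2.symm ▸ mem_image_of_mem (fun i => (a i, b i))
    (mem_univ i))
  exact ⟨q, (mem_filter.mp hq).2, congrArg Prod.fst hi, congrArg Prod.snd hi⟩

theorem Contributes.eq (hb : Function.Injective b) (hπ : Contributes g a b π)
    (hτ : Contributes g a b τ) : π = τ := by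
  ext q
  by_cases hq : k < g q
  · obtain ⟨i, hai, hbi⟩ := hπ.exists_index hq
    obtain ⟨j, haj, hbj⟩ := hτ.exists_index hq
    rw [← hai, ← haj, hb (hbi.trans hbj.symm)]
  · exact ((hπ.1 q).resolve_left hq).symm.trans ((hτ.1 q).resolve_left hq)

theorem Contributes.image_eq (hπ : Contributes g a b π) :
    univ.image g = univ.image b ∪ (range (k + 1) \ univ.image fun i => (a i : ℕ)) := by
  ext x
  simp only [mem_union, mem_sdiff, mem_image, mem_univ, true_and, mem_range]
  constructor
  · rintro ⟨q, rfl⟩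
    by_cases hq : k < g q
    · obtain ⟨i, -, hbi⟩ := hπ.exists_index hq
      exact Or.inl ⟨i, hbi⟩
    · refine Or.inr ⟨by omega, ?_⟩
      rintro ⟨i, hai⟩
      obtain ⟨q', hq', hπq', -⟩ := hπ.exists_column i
      have hq'q : q' = q := π.injective (Fin.ext (by
        rw [← (hπ.1 q).resolve_left hq, ← hai, hπq']))
      exact hq (hq'q ▸ hq')
  · rintro (⟨i, rfl⟩ | ⟨hx, hxa⟩)
    · obtain ⟨q, -, -, hq⟩ := hπ.exists_column i
      exact ⟨q, hq⟩
    · refine ⟨π.symm ⟨x, hx⟩, ?_⟩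
      rcases hπ.1 (π.symm ⟨x, hx⟩) with hq | hq
      · obtain ⟨i, hai, -⟩ := hπ.exists_index hq
        exact absurd ⟨i, by simp [hai]⟩ hxa
      · simpa using hq

theorem exists_contributes (hg : Function.Injective g) (ha : Function.Injective a)
    (hb : Function.Injective b) (hbk : ∀ i, k < b i)
    (hJ : univ.image g = univ.image b ∪ (range (k + 1) \ univ.image fun i => (a i : ℕ))) :
    ∃ π, Contributes g a b π := by
  have hrow : ∀ q, ∃ p : Fin (k + 1),
      (∃ i, b i = g q ∧ a i = p) ∨ ((p : ℕ) = g q ∧ ∀ i, (a i : ℕ) ≠ g q) := by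
    intro q
    rcases mem_union.mp (hJ ▸ mem_image_of_mem g (mem_univ q)) with h | h
    · obtain ⟨i, -, hi⟩ := mem_image.mp h
      exact ⟨a i, Or.inl ⟨i, hi, rfl⟩⟩
    · obtain ⟨hr, hA⟩ := mem_sdiff.mp h
      exact ⟨⟨g q, mem_range.mp hr⟩,
        Or.inr ⟨rfl, fun i hi => hA (hi ▸ mem_image_of_mem _ (mem_univ i))⟩⟩
  choose f hf using hrow
  have hf_inj : Function.Injective f := by
    intro q q' h
    rcases hf q with ⟨i, hbi, hai⟩ | ⟨hq, hqa⟩ <;> rcases hf q' with ⟨j, hbj, haj⟩ | ⟨hq', hqa'⟩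
    · obtain rfl : i = j := ha (by rw [hai, haj, h])
      exact hg (hbi.symm.trans hbj)
    · exact absurd (by rw [hai, h, hq']) (hqa' i)
    · exact absurd (by rw [haj, ← h, hq]) (hqa j)
    · exact hg (by rw [← hq, ← hq', h])
  refine ⟨Equiv.ofBijective f hf_inj.bijective_of_finite, fun q => ?_, ?_⟩
  · rcases hf q with ⟨i, hbi, -⟩ | ⟨hq, -⟩
    · exact Or.inl (hbi ▸ hbk i)
    · exact Or.inr hq.symm
  apply Subset.antisymm
  · intro x hx
    obtain ⟨q, hq, rfl⟩ := mem_image.mp hx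
    rcases hf q with ⟨i, hbi, hai⟩ | ⟨hfq, -⟩
    · exact mem_image.mpr ⟨i, mem_univ i, by simp [hai, hbi]⟩
    · have := (f q).isLt
      have := (mem_filter.mp hq).2
      omega
  · intro x hx
    obtain ⟨i, -, rfl⟩ := mem_image.mp hx
    obtain ⟨q, -, hq⟩ := mem_image.mp (hJ ▸ mem_union_left _ (mem_image_of_mem b (mem_univ i)))
    refine mem_image.mpr ⟨q, mem_filter.mpr ⟨mem_univ q, hq ▸ hbk i⟩, ?_⟩
    rcases hf q with ⟨j, hbj, haj⟩ | ⟨hfq, -⟩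
    · obtain rfl : j = i := hb (hbj.trans hq)
      simp [haj, hq]
    · have := (f q).isLt
      have := hbk i
      omega

end Contributes

theorem stmt_16_general (n k m' : ℕ) (J : Finset ℕ)
    (hJc : J.card = k + 1)
    (A : Fin (k + 1) → ℕ → MvPolynomial (Fin (k + 1) × ℕ) ℚ)
    (hA : ∀ l m, A l m =
      if m = (l : ℕ) then 1 else if m ≤ k then 0 else MvPolynomial.X (l, m))
    (MJ : Matrix (Fin (k + 1)) (Fin (k + 1)) (MvPolynomial (Fin (k + 1) × ℕ) ℚ))
    (hMJ : ∀ p q, MJ p q = A p ((J.orderIsoOfFin hJc q : {x // x ∈ J}) : ℕ))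
    (a : Fin m' → Fin (k + 1)) (ha : Function.Injective a)
    (b : Fin m' → ℕ) (hb : Function.Injective b)
    (hbr : ∀ i, b i ∈ Finset.Icc (k + 1) n)
    (D : MvPolynomial (Fin (k + 1) × ℕ) ℚ →ₗ[ℚ] MvPolynomial (Fin (k + 1) × ℕ) ℚ)
    (hD : D = (List.ofFn fun i : Fin m' =>
      (MvPolynomial.pderiv (R := ℚ) ((a i, b i) : Fin (k + 1) × ℕ)).toLinearMap).foldr
        (fun f g => f ∘ₗ g) LinearMap.id) :
    (J = (Finset.image b Finset.univ) ∪
        ((Finset.range (k + 1)) \ (Finset.image (fun i => ((a i : ℕ))) Finset.univ)) →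
      MvPolynomial.eval (0 : Fin (k + 1) × ℕ → ℚ) (D MJ.det) = 1 ∨
      MvPolynomial.eval (0 : Fin (k + 1) × ℕ → ℚ) (D MJ.det) = -1) ∧
    (J ≠ (Finset.image b Finset.univ) ∪
        ((Finset.range (k + 1)) \ (Finset.image (fun i => ((a i : ℕ))) Finset.univ)) →
      MvPolynomial.eval (0 : Fin (k + 1) × ℕ → ℚ) (D MJ.det) = 0) := by
  classical
  have hab : Function.Injective fun i => (a i, b i) := fun i j h => ha (congrArg Prod.fst h)
  have hMg : MJ = columnSubmatrix ℚ (J.orderEmbOfFin hJc) := by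
    refine Matrix.ext fun p q => ?_
    rw [hMJ, hA, coe_orderIsoOfFin_apply, columnSubmatrix, Matrix.of_apply]
    by_cases hq : k < J.orderEmbOfFin hJc q
    · have := p.is_le
      rw [if_neg (by omega), if_neg (by omega), if_pos hq]
    · rw [if_neg hq]
      split_ifs <;> simp_all
  have hcoeff : MvPolynomial.eval 0 (D MJ.det) =
      ∑ π : Perm (Fin (k + 1)),
        if Contributes (J.orderEmbOfFin hJc) a b π then (Perm.sign π : ℚ) else 0 := by
    rw [hD, eval_zero, constantCoeff_eq, coeff_foldr_ofFn_pderiv _ hab 0 fun _ => rfl, zero_add,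
      hMg, coeff_det_columnSubmatrix _ a b hab]
  have hJg : J = univ.image (J.orderEmbOfFin hJc) := (image_orderEmbOfFin_univ J hJc).symm
  refine ⟨fun hJ => ?_, fun hJ => ?_⟩
  · obtain ⟨π, hπ⟩ := exists_contributes (J.orderEmbOfFin hJc).injective ha hb
      (fun i => (mem_Icc.mp (hbr i)).1) (hJg ▸ hJ)
    rw [hcoeff, sum_eq_single π (fun τ _ hτ => if_neg fun h => hτ (h.eq hb hπ))
      (fun h => absurd (mem_univ π) h), if_pos hπ]
    rcases Int.units_eq_one_or (Perm.sign π) with h | h <;> simp [h]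
  · rw [hcoeff]
    exact sum_eq_zero fun π _ => if_neg fun hπ => hJ (hJg.trans hπ.image_eq)

open MvPolynomial in
/-- Evaluating the iterated partial derivative of det(M_J) at x = 0:
∂^{m'} det(M_J)/∂x_{k_1,k'_1}⋯∂x_{k_{m'},k'_{m'}} (0) = ±1 if
J = K' ∪ (I \ K) and 0 otherwise, where I = {0,...,k},
K = {k_1,...,k_{m'}} ⊆ I and K' = {k'_1,...,k'_{m'}} ⊆ {k+1,...,n}. -/
theorem stmt_16 (n k m' : ℕ) (hkn : k ≤ n) (J : Finset ℕ)
    (hJ : J ⊆ Finset.range (n + 1)) (hJc : J.card = k + 1)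
    (A : Fin (k + 1) → ℕ → MvPolynomial (Fin (k + 1) × ℕ) ℚ)
    (hA : ∀ l m, A l m =
      if m = (l : ℕ) then 1 else if m ≤ k then 0 else MvPolynomial.X (l, m))
    (MJ : Matrix (Fin (k + 1)) (Fin (k + 1)) (MvPolynomial (Fin (k + 1) × ℕ) ℚ))
    (hMJ : ∀ p q, MJ p q = A p ((J.orderIsoOfFin hJc q : {x // x ∈ J}) : ℕ))
    (a : Fin m' → Fin (k + 1)) (ha : Function.Injective a)
    (b : Fin m' → ℕ) (hb : Function.Injective b)
    (hbr : ∀ i, b i ∈ Finset.Icc (k + 1) n)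
    (D : MvPolynomial (Fin (k + 1) × ℕ) ℚ →ₗ[ℚ] MvPolynomial (Fin (k + 1) × ℕ) ℚ)
    (hD : D = (List.ofFn fun i : Fin m' =>
      (MvPolynomial.pderiv (R := ℚ) ((a i, b i) : Fin (k + 1) × ℕ)).toLinearMap).foldr
        (fun f g => f ∘ₗ g) LinearMap.id) :
    (J = (Finset.image b Finset.univ) ∪
        ((Finset.range (k + 1)) \ (Finset.image (fun i => ((a i : ℕ))) Finset.univ)) →
      MvPolynomial.eval (0 : Fin (k + 1) × ℕ → ℚ) (D MJ.det) = 1 ∨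
      MvPolynomial.eval (0 : Fin (k + 1) × ℕ → ℚ) (D MJ.det) = -1) ∧
    (J ≠ (Finset.image b Finset.univ) ∪
        ((Finset.range (k + 1)) \ (Finset.image (fun i => ((a i : ℕ))) Finset.univ)) →
      MvPolynomial.eval (0 : Fin (k + 1) × ℕ → ℚ) (D MJ.det) = 0) :=
  stmt_16_general n k m' J hJc A hA MJ hMJ a ha b hb hbr D hD
end
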